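/- arXiv:2006.09620 — 3 statements merged into one kernel-verified Lean document; each statement's English description precedes it below -/
import Mathlib

section
/- Let f be a monic cubic polynomial over ℤ with nonzero discriminant whose reduction mod p factors as a square of a linear polynomial times a distinct linear polynomial (splitting type (1²1)). Let σ₁, σ₂ be the two roots of f in an algebraic closure of ℚ_p that are congruent modulo the maximal ideal, and set r = (σ₁+σ₂)/2. If (p^ℓ/2 if p=2 else p^ℓ) divides σ₁ - r, then f(x+r) has the form x³ + a x² + (1/2)p^ℓ b x + (1/4)p^{2ℓ} c; in particular (1/4)p^{2ℓ} divides f(r) and (1/2)p^ℓ divides f'(r) in the ring of integers of the relevant extension of ℚ_p. -/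
open Polynomial

theorem stmt2 (p : ℕ) [Fact p.Prime] (ℓ : ℕ) (hℓ : 0 < ℓ)
    (L : Type) (_ : Field L) (_ : Algebra ℤ_[p] L) (_ : CharZero L)
    (f : Polynomial ℤ_[p]) (hmonic : f.Monic) (hdeg : f.natDegree = 3)
    (σ₁ σ₂ θ : integralClosure ℤ_[p] L)
    (hfact : f.map (algebraMap ℤ_[p] L) =
      (X - C (σ₁ : L)) * (X - C (σ₂ : L)) * (X - C (θ : L)))
    (hθ : ∃ u : ℤ_[p], algebraMap ℤ_[p] L u = (θ : L))
    -- splitting type (1²1): σ₁ ≡ σ₂ mod the maximal ideal, θ distinct mod the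
    -- maximal ideal
    (hcong : ¬ IsUnit (σ₁ - σ₂))
    (hdist₁ : IsUnit (σ₁ - θ)) (hdist₂ : IsUnit (σ₂ - θ))
    -- `(p^ℓ/2 if p = 2 else p^ℓ)` divides `σ₁ - r`, i.e. `p^ℓ ∣ σ₁ - σ₂ = 2(σ₁ - r)`
    (hdvd : (p : integralClosure ℤ_[p] L)^ℓ ∣ (σ₁ - σ₂)) :
    -- conclusion: `(1/4)p^(2ℓ) ∣ f(r)` and `(1/2)p^ℓ ∣ f'(r)` where `r = (σ₁+σ₂)/2`
    (∃ a : integralClosure ℤ_[p] L,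
        (a : L) = 4 * (f.map (algebraMap ℤ_[p] L)).eval (((σ₁ : L) + (σ₂ : L))/2) ∧
        (p : integralClosure ℤ_[p] L)^(2*ℓ) ∣ a) ∧
    (∃ b : integralClosure ℤ_[p] L,
        (b : L) = 2 * (derivative (f.map (algebraMap ℤ_[p] L))).eval
          (((σ₁ : L) + (σ₂ : L))/2) ∧
        (p : integralClosure ℤ_[p] L)^ℓ ∣ b) := by
  obtain ⟨d, hd⟩ : (2 : integralClosure ℤ_[p] L) ∣ (σ₁ - σ₂) := by
    by_cases hp2 : p = 2
    · subst hp2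
      exact dvd_trans (by norm_num) (dvd_trans (pow_dvd_pow _ hℓ) hdvd)
    · have hu : IsUnit (2 : ℤ_[p]) := by
        by_contra h
        rw [PadicInt.not_isUnit_iff] at h
        have h2 : (p : ℤ) ∣ (2 : ℤ) := by
          have := (PadicInt.norm_int_lt_one_iff_dvd (2 : ℤ)).mp (by exact_mod_cast h)
          exact_mod_cast this
        have hpd : p ∣ 2 := by exact_mod_cast h2
        exact hp2 ((Nat.prime_dvd_prime_iff_eq (Fact.out : p.Prime) Nat.prime_two).mp hpd)
      have hu2 : IsUnit (2 : integralClosure ℤ_[p] L) := by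
        have := hu.map (algebraMap ℤ_[p] (integralClosure ℤ_[p] L))
        rwa [map_ofNat] at this
      exact hu2.dvd
  -- key divisibility: p^ℓ ∣ 2*d
  rw [hd, two_mul] at hdvd
  -- the relation in L
  have hdL : (σ₁ : L) - (σ₂ : L) = 2 * (d : L) := by exact_mod_cast congrArg _ hd
  have hσ₂ : (σ₂ : L) = (σ₁ : L) - 2 * (d : L) := by linear_combination -hdL
  constructor
  · refine ⟨-((d+d)^2 * (σ₁ - d - θ)), ?_, ?_⟩
    · rw [hfact]
      push_cast
      simp only [eval_mul, eval_sub, eval_X, eval_C, hσ₂]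
      ring
    · rw [mul_comm 2 ℓ, pow_mul]
      exact Dvd.dvd.neg_right ((pow_dvd_pow_of_dvd hdvd 2).mul_right _)
  · refine ⟨-((d+d) * d), ?_, ?_⟩
    · rw [hfact]
      push_cast
      simp only [derivative_mul, derivative_sub, derivative_X, derivative_C, eval_mul,
        eval_add, eval_sub, eval_X, eval_C, eval_one, eval_zero, hσ₂]
      ring
    · exact Dvd.dvd.neg_right (hdvd.mul_right _)
end

section
/- Let n be a positive squarefree integer and Y ≥ 1. The number of reducible monic cubic polynomials f(x) = x³ + tx² + Ax + B with t ∈ {-1,0,1}, A, B ∈ ℤ, nonzero discriminant, all complex roots of absolute value < Y, and n | ind-type condition n² | Δ(f), is ≪_ε Y³/n^{1-ε} + n^ε Y. -/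
/-!
If `f = x³ + kx² + Ax + B` has the integer root `r`, then `f = (x - r)(x² + (k + r)x + b)` with
`b = A + r(k + r)`, `B = -rb`, and `Δ(f) = u v²` where `u = (k + r)² - 4b` is the discriminant of
the quadratic factor and `v = r² + (k + r)r + b` is its value at `r`. The root bound gives
`|r| < Y` and, `b` being the product of the other two roots, `|b| < Y²`. For squarefree `n`,
`n² ∣ u v²` splits as `n = de` with `d ∣ v` and `e² ∣ u`; once `k, r, d, e` are fixed these
congruences pin `4b` down modulo `de² ≥ n`, so the cubic is determined by
`(k, r, d, e, ⌊4b / de²⌋)`. There are `≪ Y` choices of `r`, `τ(n) ≪ n^ε` of `(d, e)` and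
`≪ Y²/n + 1` of the quotient.
-/

open Polynomial

/-- Discriminant of the monic cubic `x³ + kx² + Ax + B`. -/
def disc3 (k A B : ℤ) : ℤ :=
  18*k*A*B - 4*k^3*B + k^2*A^2 - 4*A^3 - 27*B^2

/-- The monic cubic polynomial `x³ + kx² + Ax + B`. -/
noncomputable def cubic (k A B : ℤ) : Polynomial ℤ :=
  X^3 + C k * X^2 + C A * X + C B

/-- The index of `ℤ[x]/(f)` in the maximal order (the integral closure of `ℤ`)
of `ℚ[x]/(f)`. -/
noncomputable def polyIndex (f : Polynomial ℤ) : ℕ :=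
  ((Subalgebra.toSubmodule (Algebra.adjoin ℤ
      ({AdjoinRoot.root (f.map (Int.castRingHom ℚ))} :
        Set (AdjoinRoot (f.map (Int.castRingHom ℚ)))))).toAddSubgroup).relIndex
    ((Subalgebra.toSubmodule (integralClosure ℤ
      (AdjoinRoot (f.map (Int.castRingHom ℚ))))).toAddSubgroup)

open Finset

theorem Nat.card_divisors_of_squarefree {n : ℕ} (hn : Squarefree n) :
    #n.divisors = 2 ^ #n.primeFactors := by
  rw [Nat.card_divisors hn.ne_zero, ← prod_const]
  refine prod_congr rfl fun p hp => ?_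
  rw [Nat.factorization_eq_one_of_squarefree hn (Nat.prime_of_mem_primeFactors hp)
    (Nat.dvd_of_mem_primeFactors hp)]

theorem two_le_rpow_of_two_rpow_inv_le {ε : ℝ} (hε : 0 < ε) {x : ℝ} (hx : 2 ^ ε⁻¹ ≤ x) :
    2 ≤ x ^ ε :=
  calc (2 : ℝ) = (2 ^ ε⁻¹) ^ ε := by
        rw [← Real.rpow_mul zero_le_two, inv_mul_cancel₀ hε.ne', Real.rpow_one]
    _ ≤ x ^ ε := Real.rpow_le_rpow (by positivity) hx hε.le

/-- Each prime `p ∣ n` contributes `2 ≤ p^ε` once `p ≥ 2^(1/ε)`; the smaller primes contribute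
at most a factor `2` each. -/
theorem exists_card_divisors_le_mul_rpow_of_squarefree {ε : ℝ} (hε : 0 < ε) :
    ∃ C : ℝ, 0 < C ∧ ∀ n : ℕ, Squarefree n → (#n.divisors : ℝ) ≤ C * (n : ℝ) ^ ε := by
  set T := ⌈(2 : ℝ) ^ ε⁻¹⌉₊
  refine ⟨2 ^ T, by positivity, fun n hn => ?_⟩
  have hterm : ∀ p ∈ n.primeFactors, (2 : ℝ) ≤ (if p < T then 2 else 1) * (p : ℝ) ^ ε := by
    intro p hp
    split_ifs with hpT
    · have : (1 : ℝ) ≤ (p : ℝ) ^ ε := Real.one_le_rpow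
        (by exact_mod_cast (Nat.prime_of_mem_primeFactors hp).one_le) hε.le
      linarith
    · rw [one_mul]
      exact two_le_rpow_of_two_rpow_inv_le hε
        ((Nat.le_ceil _).trans (by exact_mod_cast not_lt.mp hpT))
  have hsmall : #{p ∈ n.primeFactors | p < T} ≤ T :=
    (card_le_card fun p hp => mem_range.mpr (mem_filter.mp hp).2).trans (card_range T).le
  calc (#n.divisors : ℝ) = ∏ _p ∈ n.primeFactors, (2 : ℝ) := by
        rw [Nat.card_divisors_of_squarefree hn, prod_const]; push_cast; rfl
    _ ≤ ∏ p ∈ n.primeFactors, (if p < T then 2 else 1) * (p : ℝ) ^ ε :=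
        prod_le_prod (fun _ _ => zero_le_two) hterm
    _ = 2 ^ #{p ∈ n.primeFactors | p < T} * (n : ℝ) ^ ε := by
        rw [prod_mul_distrib, ← prod_filter, prod_const, Real.finsetProd_rpow _ _
          (fun _ _ => Nat.cast_nonneg _), ← Nat.cast_prod, Nat.prod_primeFactors_of_squarefree hn]
    _ ≤ 2 ^ T * (n : ℝ) ^ ε := by gcongr; norm_num

theorem Squarefree.exists_mul_eq_dvd_sq_dvd {n : ℕ} (hn : Squarefree n) {u v : ℤ}
    (h : (n : ℤ) ^ 2 ∣ u * v ^ 2) : ∃ d e : ℕ, d * e = n ∧ (d : ℤ) ∣ v ∧ (e : ℤ) ^ 2 ∣ u := by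
  obtain ⟨e, he⟩ := Nat.gcd_dvd_left n v.natAbs
  set d := n.gcd v.natAbs
  have hde : d.Coprime e := (Nat.squarefree_mul_iff.mp (he ▸ hn)).1
  have hev : Int.gcd e v = 1 := Nat.eq_one_of_dvd_coprimes hde
    (Nat.dvd_gcd ((Nat.gcd_dvd_left _ _).trans (Dvd.intro_left d he.symm)) (Nat.gcd_dvd_right _ _))
    (Nat.gcd_dvd_left _ _)
  refine ⟨d, e, he.symm, Int.natCast_dvd.mpr (Nat.gcd_dvd_right _ _), ?_⟩
  have hev' : IsCoprime ((e : ℤ) ^ 2) (v ^ 2) := (Int.isCoprime_iff_gcd_eq_one.mpr hev).pow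
  refine hev'.dvd_of_dvd_mul_right (dvd_trans (pow_dvd_pow_of_dvd ?_ 2) h)
  exact Int.natCast_dvd_natCast.mpr (Dvd.intro_left d he.symm)

theorem Int.eq_of_ediv_eq_of_dvd_sub {a b m : ℤ} (h : a / m = b / m) (hm : m ∣ a - b) :
    a = b := by
  have hmod : b % m = a % m := Int.modEq_iff_dvd.mpr hm
  rw [← Int.mul_ediv_add_emod a m, ← Int.mul_ediv_add_emod b m, h, hmod]

theorem Int.abs_ediv_le_ediv_add_one {a m n M : ℤ} (hn : 0 < n) (hnm : n ≤ m) (ha : |a| ≤ M) :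
    |a / m| ≤ M / n + 1 := by
  have hm : 0 < m := hn.trans_le hnm
  have h₁ : a / m * m ≤ a := Int.ediv_mul_le a hm.ne'
  have h₂ : a < (a / m + 1) * m := Int.lt_ediv_add_one_mul_self a hm
  have hM : 0 ≤ M / n := Int.ediv_nonneg ((abs_nonneg a).trans ha) hn.le
  obtain ⟨ha₁, ha₂⟩ := abs_le.mp ha
  rw [abs_le]
  constructor
  · rcases le_or_gt 0 (a / m + 1) with hi | hi
    · omega
    · have : -(a / m + 1) ≤ M / n := (Int.le_ediv_iff_mul_le hn).mpr (by nlinarith)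
      omega
  · rcases le_or_gt (a / m) 0 with hi | hi
    · omega
    · have : a / m ≤ M / n := (Int.le_ediv_iff_mul_le hn).mpr (by nlinarith)
      omega

theorem Int.cast_ediv_natCast_le {a : ℤ} {n : ℕ} {x : ℝ} (ha : (a : ℝ) ≤ x) :
    ((a / n : ℤ) : ℝ) ≤ x / n := by
  rcases Nat.eq_zero_or_pos n with rfl | hn
  · simp
  rw [le_div_iff₀ (by exact_mod_cast hn)]
  have : ((a / n : ℤ) : ℝ) * n ≤ a := by
    exact_mod_cast Int.ediv_mul_le a (by exact_mod_cast hn.ne')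
  linarith

theorem Int.cast_card_Icc_neg_self {R : Type*} [CommRing R] {a : ℤ} (ha : 0 ≤ a) :
    (#(Icc (-a) a) : R) = 2 * a + 1 := by
  rw [← Int.cast_natCast, Int.card_Icc_of_le _ _ (by omega)]
  push_cast
  ring

theorem norm_lt_sq_of_forall_root_norm_lt {p q : ℂ} {Y : ℝ}
    (h : ∀ z : ℂ, z ^ 2 + p * z + q = 0 → ‖z‖ < Y) : ‖q‖ < Y ^ 2 := by
  obtain ⟨s, hs⟩ := IsAlgClosed.exists_eq_mul_self (p ^ 2 - 4 * q)
  have h₁ := h ((-p + s) / 2) (by linear_combination (-1 / 4 : ℂ) * hs)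
  have h₂ := h ((-p - s) / 2) (by linear_combination (-1 / 4 : ℂ) * hs)
  have hq : q = (-p + s) / 2 * ((-p - s) / 2) := by linear_combination (-1 / 4 : ℂ) * hs
  rw [hq, norm_mul, sq]
  exact mul_lt_mul'' h₁ h₂ (norm_nonneg _) (norm_nonneg _)

theorem eq_neg_mul_of_eval_cubic_eq_zero {k A B r : ℤ} (hr : (cubic k A B).eval r = 0) :
    B = -(r * (A + r * (k + r))) := by
  simp only [cubic, eval_add, eval_mul, eval_pow, eval_C, eval_X] at hr
  linear_combination hr

theorem cubic_eq_mul_of_eval_eq_zero {k A B r : ℤ} (hr : (cubic k A B).eval r = 0) :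
    cubic k A B = (X - C r) * (X ^ 2 + C (k + r) * X + C (A + r * (k + r))) := by
  simp only [cubic, eq_neg_mul_of_eval_cubic_eq_zero hr, C_add, C_mul, C_neg]
  ring

theorem disc3_eq_of_eval_eq_zero {k A B r : ℤ} (hr : (cubic k A B).eval r = 0) :
    disc3 k A B = ((k + r) ^ 2 - 4 * (A + r * (k + r))) *
      (r ^ 2 + (k + r) * r + (A + r * (k + r))) ^ 2 := by
  rw [disc3, eq_neg_mul_of_eval_cubic_eq_zero hr]
  ring

theorem abs_lt_of_eval_cubic_eq_zero {k A B r : ℤ} {Y : ℝ} (hr : (cubic k A B).eval r = 0)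
    (hY : ∀ z : ℂ, aeval z (cubic k A B) = 0 → ‖z‖ < Y) :
    |(r : ℝ)| < Y ∧ |((A + r * (k + r) : ℤ) : ℝ)| < Y ^ 2 := by
  have hroot : ∀ z : ℂ, aeval z (cubic k A B) =
      (z - r) * (z ^ 2 + ((k + r : ℤ) : ℂ) * z + ((A + r * (k + r) : ℤ) : ℂ)) := by
    intro z
    simp [cubic_eq_mul_of_eval_eq_zero hr]
  constructor
  · simpa using hY r (by rw [hroot]; ring)
  · rw [← Complex.norm_intCast]
    exact norm_lt_sq_of_forall_root_norm_lt fun z hz => hY z (by rw [hroot, hz, mul_zero])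

def IsCubicLabel (n : ℕ) : ℤ × ℤ × ℤ → ℤ × ℤ × (ℕ × ℕ) × ℤ → Prop
  | (k, A, B), (k', r, (d, e), i) =>
    let b := A + r * (k + r)
    k' = k ∧ (cubic k A B).eval r = 0 ∧ d * e = n ∧ (d : ℤ) ∣ r ^ 2 + (k + r) * r + b ∧
      (e : ℤ) ^ 2 ∣ (k + r) ^ 2 - 4 * b ∧ i = 4 * b / (d * e ^ 2)

theorem IsCubicLabel.eq {n : ℕ} (hn : Squarefree n) {x x' : ℤ × ℤ × ℤ}
    {y : ℤ × ℤ × (ℕ × ℕ) × ℤ} (h : IsCubicLabel n x y) (h' : IsCubicLabel n x' y) : x = x' := by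
  obtain ⟨k, r, ⟨d, e⟩, i⟩ := y
  obtain ⟨k₁, A, B⟩ := x
  obtain ⟨k₂, A', B'⟩ := x'
  obtain ⟨rfl, hr, hde, hd, he, hi⟩ := h
  obtain ⟨rfl, hr', -, hd', he', hi'⟩ := h'
  have hcop : IsCoprime (d : ℤ) ((e : ℤ) ^ 2) :=
    (Int.isCoprime_iff_gcd_eq_one.mpr (Nat.squarefree_mul_iff.mp (hde ▸ hn)).1).pow_right
  have hdvd : (d : ℤ) * e ^ 2 ∣ 4 * (A + r * (k + r)) - 4 * (A' + r * (k + r)) := by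
    refine hcop.mul_dvd ?_ ?_
    · exact (Dvd.dvd.mul_left (dvd_sub hd hd') 4).trans (dvd_of_eq (by ring))
    · exact (dvd_sub he' he).trans (dvd_of_eq (by ring))
  have hA : A = A' := by
    have := Int.eq_of_ediv_eq_of_dvd_sub (hi.symm.trans hi') hdvd
    omega
  subst hA
  rw [eq_neg_mul_of_eval_cubic_eq_zero hr, eq_neg_mul_of_eval_cubic_eq_zero hr']

noncomputable def cubicLabels (K : Finset ℤ) (n : ℕ) (Y : ℝ) : Finset (ℤ × ℤ × (ℕ × ℕ) × ℤ) :=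
  K ×ˢ Icc (-⌊Y⌋) ⌊Y⌋ ×ˢ n.divisorsAntidiagonal ×ˢ
    Icc (-(4 * ⌊Y ^ 2⌋ / n + 1)) (4 * ⌊Y ^ 2⌋ / n + 1)

theorem exists_mem_cubicLabels {K : Finset ℤ} {n : ℕ} (hn : Squarefree n) {Y : ℝ} {k A B : ℤ}
    (hk : k ∈ K) (hr : ∃ r : ℤ, (cubic k A B).eval r = 0) (hdisc : (n : ℤ) ^ 2 ∣ disc3 k A B)
    (hY : ∀ z : ℂ, aeval z (cubic k A B) = 0 → ‖z‖ < Y) :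
    ∃ y ∈ cubicLabels K n Y, IsCubicLabel n (k, A, B) y := by
  obtain ⟨r, hr⟩ := hr
  obtain ⟨hrY, hbY⟩ := abs_lt_of_eval_cubic_eq_zero hr hY
  rw [disc3_eq_of_eval_eq_zero hr] at hdisc
  obtain ⟨d, e, hde, hd, he⟩ := hn.exists_mul_eq_dvd_sq_dvd hdisc
  set b := A + r * (k + r)
  have hnm : (n : ℤ) ≤ d * e ^ 2 := by
    have : 0 < e := Nat.pos_of_ne_zero fun he₀ => hn.ne_zero (by rw [← hde, he₀, mul_zero])
    rw [← hde]; push_cast; nlinarith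
  have hb : |4 * b| ≤ 4 * ⌊Y ^ 2⌋ := by
    rw [abs_mul, abs_of_pos four_pos]
    exact mul_le_mul_of_nonneg_left (Int.le_floor.mpr (by exact_mod_cast hbY.le)) zero_le_four
  refine ⟨(k, r, (d, e), 4 * b / (d * e ^ 2)), ?_, rfl, hr, hde, hd, he, rfl⟩
  simp only [cubicLabels, mem_product, mem_Icc, ← abs_le, Nat.mem_divisorsAntidiagonal]
  exact ⟨hk, Int.le_floor.mpr (by exact_mod_cast hrY.le), ⟨hde, hn.ne_zero⟩,
    Int.abs_ediv_le_ediv_add_one (by exact_mod_cast hn.ne_zero.bot_lt) hnm hb⟩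

theorem card_le_card_cubicLabels {K : Finset ℤ} {n : ℕ} (hn : Squarefree n) {Y : ℝ}
    {P : ℤ × ℤ × ℤ → Prop} (hP : ∀ x, P x → x.1 ∈ K ∧
      (∃ r : ℤ, (cubic x.1 x.2.1 x.2.2).eval r = 0) ∧ (n : ℤ) ^ 2 ∣ disc3 x.1 x.2.1 x.2.2 ∧
      ∀ z : ℂ, aeval z (cubic x.1 x.2.1 x.2.2) = 0 → ‖z‖ < Y) :
    Nat.card {x // P x} ≤ #(cubicLabels K n Y) := by
  choose f hfmem hf using fun x : {x // P x} =>
    have ⟨hk, hr, hdisc, hY⟩ := hP x x.2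
    exists_mem_cubicLabels hn hk hr hdisc hY
  rw [← Nat.card_eq_finsetCard]
  refine Nat.card_le_card_of_injective (fun x => ⟨f x, hfmem x⟩) fun x x' hxx' => ?_
  have hff : f x = f x' := congrArg Subtype.val hxx'
  exact Subtype.ext ((hf x).eq hn (hff ▸ hf x'))

theorem card_cubicLabels_le (K : Finset ℤ) (n : ℕ) {Y : ℝ} (hY : 1 ≤ Y) :
    (#(cubicLabels K n Y) : ℝ) ≤ #K * (3 * Y) * #n.divisors * (8 * Y ^ 2 / n + 3) := by
  set L := 4 * ⌊Y ^ 2⌋ / n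
  have hL₀ : 0 ≤ L := Int.ediv_nonneg (by positivity) (Int.natCast_nonneg n)
  have hL : (L : ℝ) ≤ 4 * Y ^ 2 / n :=
    Int.cast_ediv_natCast_le (by push_cast; linarith [Int.floor_le (Y ^ 2)])
  have hr : (#(Icc (-⌊Y⌋) ⌊Y⌋) : ℝ) ≤ 3 * Y := by
    rw [Int.cast_card_Icc_neg_self (Int.floor_nonneg.mpr (by linarith))]
    linarith [Int.floor_le Y]
  have hi : (#(Icc (-(L + 1)) (L + 1)) : ℝ) ≤ 8 * Y ^ 2 / n + 3 := by
    rw [Int.cast_card_Icc_neg_self (by omega)]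
    push_cast
    linarith [show 8 * Y ^ 2 / n = 2 * (4 * Y ^ 2 / n) by ring]
  have hd : #n.divisorsAntidiagonal = #n.divisors := by
    rw [← Nat.map_div_right_divisors, card_map]
  calc (#(cubicLabels K n Y) : ℝ)
        = #K * (#(Icc (-⌊Y⌋) ⌊Y⌋) * (#n.divisors * #(Icc (-(L + 1)) (L + 1)))) := by
        simp only [cubicLabels, card_product, Nat.cast_mul, hd, L]
    _ ≤ #K * (3 * Y * (#n.divisors * (8 * Y ^ 2 / n + 3))) := by gcongr
    _ = _ := by ring

theorem stmt7 : ∀ ε : ℝ, 0 < ε → ∃ C : ℝ, 0 < C ∧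
    ∀ n : ℕ, 0 < n → Squarefree n → ∀ Y : ℝ, 1 ≤ Y →
      (Nat.card {x : ℤ × ℤ × ℤ //
          x.1 ∈ ({-1, 0, 1} : Set ℤ) ∧
          (∃ r : ℤ, (cubic x.1 x.2.1 x.2.2).eval r = 0) ∧
          disc3 x.1 x.2.1 x.2.2 ≠ 0 ∧
          (n : ℤ)^2 ∣ disc3 x.1 x.2.1 x.2.2 ∧
          (∀ z : ℂ, (Polynomial.aeval z) (cubic x.1 x.2.1 x.2.2) = 0 →
            ‖z‖ < Y)} : ℝ) ≤
        C * (Y^3 / (n : ℝ)^(1 - ε) + (n : ℝ)^ε * Y) := by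
  intro ε hε
  obtain ⟨C₀, hC₀, hτ⟩ := exists_card_divisors_le_mul_rpow_of_squarefree hε
  refine ⟨72 * C₀, by positivity, fun n hn hsf Y hY => ?_⟩
  have hn' : (0 : ℝ) < n := by exact_mod_cast hn
  calc (Nat.card _ : ℝ) ≤ #(cubicLabels {-1, 0, 1} n Y) :=
        Nat.cast_le.mpr <| card_le_card_cubicLabels hsf fun x hx =>
          ⟨by simpa using hx.1, hx.2.1, hx.2.2.2⟩
    _ ≤ 3 * (3 * Y) * (C₀ * (n : ℝ) ^ ε) * (8 * Y ^ 2 / n + 3) := by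
        grw [card_cubicLabels_le _ n hY, hτ n hsf]
        rfl
    _ = C₀ * (72 * (Y ^ 3 / (n : ℝ) ^ (1 - ε)) + 27 * ((n : ℝ) ^ ε * Y)) := by
        rw [Real.rpow_sub hn', Real.rpow_one]
        field_simp
        ring
    _ ≤ 72 * C₀ * (Y ^ 3 / (n : ℝ) ^ (1 - ε) + (n : ℝ) ^ ε * Y) := by
        have : 0 ≤ (n : ℝ) ^ ε * Y := by positivity
        nlinarith
end

section
/- Every cubic field K contains an element α ∈ O_K \ ℤ with trace in {-1, 0, 1} and with all archimedean absolute values at most C·|Δ(K)|^{1/4}, for some absolute constant C. -/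
/-!
Minkowski's theorem applied to the box of radius 1 at a real place `w₀` and radius `B` at the
other places, where `B ^ (n - 1)` is a large multiple of `√|Δ|`, gives a nonzero algebraic integer
`a` with `|a|_{w₀} < 1`, hence `a ∉ ℤ`, and `|a|_w < B` everywhere. Since `|Tr a| ≤ n B`,
subtracting the integer nearest to `Tr a / n` moves the trace into `[-n/2, n/2]` at a cost of at
most `B + 1/2` at each place. A cubic field has a real place, and for `n = 3` one may take
`B = 3 |Δ|^{1/4}`.
-/

open scoped NNReal ENNReal
open NumberField NumberField.InfinitePlace NumberField.mixedEmbedding Module MeasureTheory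

namespace NumberField

variable {K : Type*} [Field K]

theorem notMem_range_algebraMap_of_lt_one {a : 𝓞 K} (ha : a ≠ 0) {w : InfinitePlace K}
    (hw : w a < 1) : a ∉ Set.range (algebraMap ℤ (𝓞 K)) := by
  rintro ⟨m, rfl⟩
  have hm : m ≠ 0 := by rintro rfl; exact ha (map_zero _)
  simp only [algebraMap_int_eq, eq_intCast, map_intCast, InfinitePlace.map_intCast,
    Int.norm_eq_abs] at hw
  exact hw.not_ge (by exact_mod_cast Int.one_le_abs hm)

variable [NumberField K]

theorem one_le_abs_discr : 1 ≤ |(discr K : ℝ)| := by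
  exact_mod_cast Int.one_le_abs (discr_ne_zero K)

theorem abs_trace_le_of_forall_le {x : K} {B : ℝ} (h : ∀ w : InfinitePlace K, w x ≤ B) :
    |(Algebra.trace ℚ K x : ℝ)| ≤ finrank ℚ K * B :=
  calc |(Algebra.trace ℚ K x : ℝ)| = ‖algebraMap ℚ ℂ (Algebra.trace ℚ K x)‖ := by simp
    _ ≤ ∑ σ : K →ₐ[ℚ] ℂ, ‖σ x‖ :=
      trace_eq_sum_embeddings ℂ (K := ℚ) (L := K) (x := x) ▸ norm_sum_le _ _
    _ ≤ ∑ _σ : K →ₐ[ℚ] ℂ, B :=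
      Finset.sum_le_sum fun σ _ ↦ h (InfinitePlace.mk σ.toRingHom)
    _ = finrank ℚ K * B := by simp [AlgHom.card]

theorem minkowskiBound_one_le :
    minkowskiBound K 1 ≤ 2 ^ finrank ℚ K * NNReal.sqrt ‖discr K‖₊ := by
  classical
  rw [minkowskiBound, volume_fundamentalDomain_fractionalIdealLatticeBasis, Units.val_one,
    FractionalIdeal.absNorm_one, Rat.cast_one, ENNReal.ofReal_one, one_mul,
    volume_fundamentalDomain_latticeBasis, mixedEmbedding.finrank, mul_comm]
  gcongr
  exact mul_le_of_le_one_left zero_le (pow_le_one₀ zero_le (by simp))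

theorem exists_notMem_range_algebraMap_lt_of_isReal {w₀ : InfinitePlace K} (hw₀ : IsReal w₀)
    {B : ℝ≥0} (hB : 2 ^ finrank ℚ K * √|(discr K : ℝ)| < B ^ (finrank ℚ K - 1)) :
    ∃ a : 𝓞 K, a ∉ Set.range (algebraMap ℤ (𝓞 K)) ∧
      ∀ w : InfinitePlace K, w a < B := by
  classical
  have hB₁ : 1 ≤ B := by
    by_contra! hB₁
    have : 1 ≤ 2 ^ finrank ℚ K * √|(discr K : ℝ)| := one_le_mul_of_one_le_of_one_le
      (one_le_pow₀ one_le_two) (Real.one_le_sqrt.mpr one_le_abs_discr)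
    exact (hB.trans_le (pow_le_one₀ B.2 hB₁.le)).not_ge this
  have hvol :
      minkowskiBound K 1 < volume (convexBodyLT K (fun w ↦ if w = w₀ then 1 else B)) := by
    have hmult : ∑ w ∈ Finset.univ.erase w₀, mult w = finrank ℚ K - 1 := by
      rw [← sum_mult_eq, ← Finset.add_sum_erase _ _ (Finset.mem_univ w₀), mult, if_pos hw₀,
        Nat.add_sub_cancel_left]
    rw [convexBodyLT_volume, ← Finset.mul_prod_erase _ _ (Finset.mem_univ w₀), if_pos rfl,
      one_pow, one_mul, Finset.prod_congr rfl fun w hw ↦ by rw [if_neg (Finset.ne_of_mem_erase hw)],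
      Finset.prod_pow_eq_pow_sum, hmult]
    refine minkowskiBound_one_le.trans_lt (lt_of_lt_of_le ?_
      (le_mul_of_one_le_left zero_le (by exact_mod_cast one_le_convexBodyLTFactor K)))
    rw [← ENNReal.coe_ofNat, ← ENNReal.coe_pow, ← ENNReal.coe_mul, ENNReal.coe_lt_coe,
      ← NNReal.coe_lt_coe]
    simpa [Int.norm_eq_abs] using hB
  obtain ⟨a, ha₀, ha⟩ := exists_ne_zero_mem_ringOfIntegers_lt K hvol
  refine ⟨a, notMem_range_algebraMap_of_lt_one ha₀ (w := w₀) (by simpa using ha w₀),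
    fun w ↦ (ha w).trans_le ?_⟩
  split_ifs
  · exact_mod_cast hB₁
  · rfl

theorem exists_abs_trace_sub_intCast_le (a : 𝓞 K) {B : ℝ}
    (h : ∀ w : InfinitePlace K, w a ≤ B) :
    ∃ q : ℤ, 2 * |Algebra.trace ℤ (𝓞 K) (a - q)| ≤ finrank ℚ K ∧
      ∀ w : InfinitePlace K, w (a - q : 𝓞 K) ≤ 2 * B + 2⁻¹ := by
  set n := finrank ℚ K
  set t := Algebra.trace ℤ (𝓞 K) a
  have hn : (0 : ℝ) < n := Nat.cast_pos.mpr finrank_pos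
  have ht : |(t : ℝ)| ≤ n * B := by
    have := abs_trace_le_of_forall_le h
    rwa [← Algebra.coe_trace_int, Rat.cast_intCast] at this
  set q := round ((t : ℝ) / n)
  have hq : |(t : ℝ) / n - q| ≤ 2⁻¹ := by simpa using abs_sub_round ((t : ℝ) / n)
  have htrace : Algebra.trace ℤ (𝓞 K) (a - q) = t - n * q := by
    rw [map_sub, ← eq_intCast (algebraMap ℤ (𝓞 K)), Algebra.trace_algebraMap,
      RingOfIntegers.rank, nsmul_eq_mul]
  refine ⟨q, ?_, fun w ↦ ?_⟩
  · rw [htrace]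
    have : 2 * |(t : ℝ) - n * q| ≤ n := by
      rw [show (t : ℝ) - n * q = n * ((t : ℝ) / n - q) by field_simp, abs_mul, Nat.abs_cast]
      nlinarith
    exact_mod_cast this
  · have hqB : |(q : ℝ)| ≤ B + 2⁻¹ := by
      have htn : |(t : ℝ) / n| ≤ B := by rwa [abs_div, Nat.abs_cast, div_le_iff₀ hn, mul_comm]
      have := abs_sub_abs_le_abs_sub (q : ℝ) ((t : ℝ) / n)
      rw [abs_sub_comm] at this
      linarith
    calc w (a - q : 𝓞 K) ≤ w a + w (q : K) := by push_cast; exact w.1.sub_le_add _ _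
      _ ≤ B + (B + 2⁻¹) := by
        rw [InfinitePlace.map_intCast, Int.norm_eq_abs]
        exact add_le_add (h w) hqB
      _ = 2 * B + 2⁻¹ := by ring

end NumberField

theorem stmt11 : ∃ C : ℝ, 0 < C ∧
    ∀ (K : Type) (_ : Field K) (_ : NumberField K),
      Module.finrank ℚ K = 3 →
      ∃ α : 𝓞 K,
        α ∉ Set.range (algebraMap ℤ (𝓞 K)) ∧
        Algebra.trace ℤ (𝓞 K) α ∈ ({-1, 0, 1} : Set ℤ) ∧
        ∀ φ : K →+* ℂ,
          ‖φ (algebraMap (𝓞 K) K α)‖ ≤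
            C * |(NumberField.discr K : ℝ)| ^ ((1 : ℝ)/4) := by
  refine ⟨7, by norm_num, fun K _ _ h3 ↦ ?_⟩
  classical
  obtain ⟨⟨w₀, hw₀⟩⟩ := Fintype.card_pos_iff.mp <|
    nrRealPlaces_pos_of_odd_finrank (K := K) (by rw [h3]; decide)
  set R := |(discr K : ℝ)| ^ ((1 : ℝ) / 4)
  have hR : 1 ≤ R := Real.one_le_rpow one_le_abs_discr (by norm_num)
  have hR2 : R ^ 2 = √|(discr K : ℝ)| := by
    rw [Real.sqrt_eq_rpow, ← Real.rpow_natCast, ← Real.rpow_mul (abs_nonneg _)]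
    norm_num
  have h3R : ((3 * R).toNNReal : ℝ) = 3 * R := Real.coe_toNNReal _ (by positivity)
  obtain ⟨a, ha, haR⟩ :=
    exists_notMem_range_algebraMap_lt_of_isReal hw₀ (B := (3 * R).toNNReal) (by
      rw [h3, h3R, ← hR2]; norm_num; nlinarith)
  obtain ⟨q, htr, hq⟩ := exists_abs_trace_sub_intCast_le a fun w ↦ h3R ▸ (haR w).le
  refine ⟨a - q, ?_, ?_, fun φ ↦ ?_⟩
  · rintro ⟨m, hm⟩
    exact ha ⟨m + q, by rw [map_add, hm, eq_intCast, sub_add_cancel]⟩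
  · rw [h3, Nat.cast_ofNat] at htr
    obtain ⟨hlo, hhi⟩ := abs_le.mp (show |Algebra.trace ℤ (𝓞 K) (a - q)| ≤ 1 by omega)
    simp only [Set.mem_insert_iff, Set.mem_singleton_iff]
    omega
  · calc ‖φ (a - q : 𝓞 K)‖ = InfinitePlace.mk φ (a - q : 𝓞 K) := rfl
      _ ≤ 2 * (3 * R) + 2⁻¹ := hq _
      _ ≤ 7 * R := by linarith
end
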